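/- arXiv:1510.06803 — 5 statements merged into one kernel-verified Lean document; each statement's English description precedes it below -/
import Mathlib

section
/- Let k be a field, f ∈ k[T] separable of degree n, A = k[T]/(f), t the image of T, and d_i = a_{i+1} + a_{i+2}t + ⋯ + a_n t^{n-1-i}. Then the elements d_i/f'(t) form the dual basis of 1, t, …, t^{n-1} with respect to the trace form: Tr_{A/k}(d_i · t^j / f'(t)) = δ_{ij} for 0 ≤ i,j ≤ n-1. -/
/-!
Over `A = R[X]/(f)` with `f` monic, `f = (X - t) D` where `t` is the root and `D = ∑ dᵢ Xⁱ`.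
In `B = A[X]/(f)` the element `D(root)` is killed by `root - t`, so multiplication by
`x D(root)` has rank one and trace `x(t) D(t) = x(t) f'(t)` over `A`. Since the trace of a
class `P mod f` is given by a formula in the coefficients of `P` and `f`, it commutes with
base change, and comparing both computations of `Tr_{B/A}(rootᵐ D(root))` gives Euler's identity
`∑ᵢ Tr_{A/R}(t^{i+m}) dᵢ = tᵐ f'(t)`. It says that the coordinates of the `dᵢ / f'(t)` form a
left inverse of the Gram matrix of the trace form on `1, t, …, t^{n-1}`; a left inverse of a
square matrix is a right inverse, which is the claim. A non-monic `f` over a field is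
reduced to the monic `f / lc(f)`, which rescales both `dᵢ` and `f'(t)`.
-/

open Polynomial Finset

theorem LinearMap.apply_eq_ite_of_sum_apply_smul_eq {R M ι : Type*} [CommRing R]
    [AddCommGroup M] [Module R M] [Fintype ι] [DecidableEq ι] (b : Module.Basis ι R M)
    (B : M →ₗ[R] M →ₗ[R] R) {e : ι → M} (he : ∀ m, ∑ p, B (b p) (b m) • e p = b m)
    (i j : ι) :
    B (b j) (e i) = if j = i then 1 else 0 := by
  have hEG : b.toMatrix e * toMatrix₂ b b B = 1 := by
    ext q m
    simpa [Matrix.mul_apply, Module.Basis.toMatrix_apply, Matrix.one_apply, Finsupp.single_apply,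
      mul_comm, eq_comm] using congrArg (b.repr · q) (he m)
  calc B (b j) (e i) = B (b j) (∑ p, b.repr (e i) p • b p) := by rw [b.sum_repr]
    _ = (toMatrix₂ b b B * b.toMatrix e) j i := by
        simp only [map_sum, map_smul, smul_eq_mul, Matrix.mul_apply, toMatrix₂_apply,
          Module.Basis.toMatrix_apply, mul_comm]
    _ = _ := by rw [mul_eq_one_comm.mp hEG, Matrix.one_apply]

namespace Polynomial

theorem eval_divByMonic_X_sub_C_self {R : Type*} [CommRing R] (p : R[X]) (a : R) :
    (p /ₘ (X - C a)).eval a = (derivative p).eval a := by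
  simpa using
    congrArg (eval a) (divByMonic_add_X_sub_C_mul_derivative_divByMonic_eq_derivative p a)

section eulerCoeff

variable {R S : Type*} [CommSemiring R] [Semiring S] [Algebra R S]

def eulerCoeff (f : R[X]) (t : S) (i : ℕ) : S :=
  ∑ j ∈ range (f.natDegree - i), f.coeff (i + 1 + j) • t ^ j

theorem eulerCoeff_mul_C [NoZeroDivisors R] (f : R[X]) {c : R} (hc : c ≠ 0) (t : S) (i : ℕ) :
    (f * C c).eulerCoeff t i = c • f.eulerCoeff t i := by
  simp only [eulerCoeff, natDegree_mul_C hc, coeff_mul_C, smul_sum, smul_smul, mul_comm]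

theorem map_eulerCoeff {T F : Type*} [Semiring T] [Algebra R T] [FunLike F S T]
    [AlgHomClass F R S T] (φ : F) (f : R[X]) (t : S) (i : ℕ) :
    φ (f.eulerCoeff t i) = f.eulerCoeff (φ t) i := by
  simp only [eulerCoeff, map_sum, map_smul, map_pow]

end eulerCoeff

theorem Monic.coeff_map_divByMonic_X_sub_C {R S : Type*} [CommRing R] [CommRing S]
    [Algebra R S] {f : R[X]} (hf : f.Monic) (t : S) (i : ℕ) :
    (f.map (algebraMap R S) /ₘ (X - C t)).coeff i = f.eulerCoeff t i := by
  nontriviality S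
  rw [coeff_divByMonic_X_sub_C, hf.natDegree_map, eulerCoeff, ← Ico_add_one_right_eq_Icc,
    sum_Ico_eq_sum_range, show f.natDegree + 1 - (i + 1) = f.natDegree - i by omega]
  refine sum_congr rfl fun j _ => ?_
  rw [Nat.add_sub_cancel_left, coeff_map, Algebra.smul_def, mul_comm]

end Polynomial

namespace AdjoinRoot

variable {R : Type*} [CommRing R] {f q : R[X]}

theorem trace_mk (hf : f.Monic) (P : R[X]) :
    Algebra.trace R (AdjoinRoot f) (mk f P) =
      ∑ s ∈ range f.natDegree, ((X ^ s * P) %ₘ f).coeff s := by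
  rw [Algebra.trace_eq_matrix_trace (powerBasis' hf).basis, Matrix.trace,
    ← Fin.sum_univ_eq_sum_range (fun s => ((X ^ s * P) %ₘ f).coeff s)]
  refine sum_congr rfl fun s _ => ?_
  rw [Matrix.diag_apply, Algebra.leftMulMatrix_eq_repr_mul, (powerBasis' hf).basis_eq_pow,
    powerBasis'_gen, ← mk_X, ← map_pow, ← map_mul, mul_comm]
  exact congrArg (coeff · s) (modByMonicHom_mk hf _)

theorem trace_mk_map {S : Type*} [CommRing S] (hf : f.Monic) (φ : R →+* S) (P : R[X]) :
    Algebra.trace S (AdjoinRoot (f.map φ)) (mk _ (P.map φ)) =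
      φ (Algebra.trace R (AdjoinRoot f) (mk f P)) := by
  nontriviality S
  simp only [trace_mk hf, trace_mk (hf.map φ), hf.natDegree_map, map_sum, ← coeff_map,
    map_modByMonic φ hf, Polynomial.map_mul, Polynomial.map_pow, Polynomial.map_X]

theorem mk_divByMonic_mul {t : R} (ht : q.IsRoot t) (Q : R[X]) :
    mk q (q /ₘ (X - C t) * Q) = Q.eval t • mk q (q /ₘ (X - C t)) := by
  obtain ⟨U, hU⟩ := X_sub_C_dvd_sub_C_eval (a := t) (p := Q)
  rw [Algebra.smul_def, algebraMap_eq, ← mk_C, ← map_mul, mk_eq_mk]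
  exact ⟨U, by linear_combination q /ₘ (X - C t) * hU + U * mul_divByMonic_eq_iff_isRoot.mpr ht⟩

theorem trace_mk_mul_divByMonic (hq : q.Monic) {t : R} (ht : q.IsRoot t) (P : R[X]) :
    Algebra.trace R (AdjoinRoot q) (mk q (P * (q /ₘ (X - C t)))) =
      P.eval t * (q /ₘ (X - C t)).eval t := by
  have := hq.free_adjoinRoot
  have := hq.finite_adjoinRoot
  let ε := liftAlgHom q (Algebra.ofId R R) t (by simpa using ht)
  have hε (Q : R[X]) : ε (mk q Q) = Q.eval t := by simp [ε, liftAlgHom_mk, eval₂_eq_eval_map]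
  have hrankOne : Algebra.lmul R _ (mk q (P * (q /ₘ (X - C t)))) =
      ε.toLinearMap.smulRight (mk q (P * (q /ₘ (X - C t)))) := by
    ext y
    obtain ⟨Q, rfl⟩ := mk_surjective y
    rw [Algebra.coe_lmul_eq_mul, LinearMap.mul_apply', LinearMap.smulRight_apply,
      AlgHom.toLinearMap_apply, hε, ← map_mul, mul_assoc, map_mul, mk_divByMonic_mul ht,
      mul_smul_comm, ← map_mul]
  rw [Algebra.trace_apply, hrankOne, LinearMap.trace_smulRight, AlgHom.toLinearMap_apply, hε,
    eval_mul]

theorem sum_trace_root_pow_smul_eulerCoeff (hf : f.Monic) (m : ℕ) :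
    ∑ p ∈ range f.natDegree,
        Algebra.trace R (AdjoinRoot f) (root f ^ (p + m)) • f.eulerCoeff (root f) p =
      root f ^ m * mk f (derivative f) := by
  nontriviality AdjoinRoot f
  set q := f.map (algebraMap R (AdjoinRoot f))
  set D := q /ₘ (X - C (root f))
  have hD : D = ∑ p ∈ range f.natDegree, C (f.eulerCoeff (root f) p) * X ^ p := by
    refine (D.as_sum_range' _ ?_).trans (sum_congr rfl fun p _ => ?_)
    · rw [natDegree_divByMonic _ (monic_X_sub_C _), hf.natDegree_map, natDegree_X_sub_C]
      refine Nat.sub_lt (Nat.pos_of_ne_zero fun h => one_ne_zero (α := AdjoinRoot f) ?_) one_pos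
      rw [← map_one (mk f), ← hf.natDegree_eq_zero.mp h, mk_self]
    · rw [← C_mul_X_pow_eq_monomial, hf.coeff_map_divByMonic_X_sub_C]
  have hterm (p : ℕ) :
      Algebra.trace (AdjoinRoot f) (AdjoinRoot q)
          (mk q (X ^ m * (C (f.eulerCoeff (root f) p) * X ^ p))) =
        Algebra.trace R (AdjoinRoot f) (root f ^ (p + m)) • f.eulerCoeff (root f) p := by
    rw [show X ^ m * (C (f.eulerCoeff (root f) p) * X ^ p) =
        C (f.eulerCoeff (root f) p) * (X ^ (p + m)).map (algebraMap R (AdjoinRoot f)) by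
      rw [Polynomial.map_pow, map_X]; ring, map_mul, mk_C, ← algebraMap_eq, ← Algebra.smul_def,
      map_smul, trace_mk_map hf, ← mk_X, ← map_pow, smul_eq_mul, Algebra.smul_def, mul_comm]
  calc _ = Algebra.trace (AdjoinRoot f) (AdjoinRoot q) (mk q (X ^ m * D)) := by
        simp only [hD, mul_sum, map_sum, hterm]
    _ = root f ^ m * mk f (derivative f) := by
        rw [trace_mk_mul_divByMonic (q := q) (hf.map _) (isRoot_root f),
          eval_divByMonic_X_sub_C_self, derivative_map, eval_map_algebraMap, aeval_eq, eval_pow,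
          eval_X]

theorem trace_eulerCoeff_mul_root_pow_mul (hf : f.Monic) {g : AdjoinRoot f}
    (hg : g * mk f (derivative f) = 1) {i j : ℕ} (hi : i < f.natDegree) (hj : j < f.natDegree) :
    Algebra.trace R (AdjoinRoot f) (f.eulerCoeff (root f) i * root f ^ j * g) =
      if i = j then 1 else 0 := by
  have hdual := (Algebra.traceForm R (AdjoinRoot f)).apply_eq_ite_of_sum_apply_smul_eq
    (powerBasis' hf).basis (e := fun p => f.eulerCoeff (root f) p * g) (fun m => ?_)
    ⟨i, hi⟩ ⟨j, hj⟩
  · simpa [Fin.ext_iff, mul_comm, mul_left_comm, eq_comm] using hdual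
  · simp only [PowerBasis.coe_basis, powerBasis'_gen, Algebra.traceForm_apply, ← pow_add,
      ← smul_mul_assoc, ← sum_mul]
    rw [Fin.sum_univ_eq_sum_range (fun p => Algebra.trace R _ (root f ^ (p + m)) •
      f.eulerCoeff (root f) p)]
    calc _ = root f ^ (m : ℕ) * mk f (derivative f) * g :=
          congrArg (· * g) (sum_trace_root_pow_smul_eulerCoeff hf m)
      _ = _ := by rw [mul_assoc, mul_comm _ g, hg, mul_one]

theorem trace_eulerCoeff_mul_root_pow_mul_of_ne_zero {k : Type*} [Field k] {f : k[X]}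
    (hf : f ≠ 0) {g : AdjoinRoot f} (hg : g * mk f (derivative f) = 1) {i j : ℕ}
    (hi : i < f.natDegree) (hj : j < f.natDegree) :
    Algebra.trace k (AdjoinRoot f) (f.eulerCoeff (root f) i * root f ^ j * g) =
      if i = j then 1 else 0 := by
  set c := f.leadingCoeff
  have hc : c ≠ 0 := leadingCoeff_ne_zero.mpr hf
  set h := f * C c⁻¹
  let e := algEquivOfAssociated k f h
    (associated_mul_unit_right f _ (isUnit_C.mpr (inv_ne_zero hc).isUnit))
  have he (P : k[X]) : e (mk f P) = mk h P := by
    rw [← aeval_eq, ← aeval_eq, ← aeval_algHom_apply, algEquivOfAssociated_root]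
  have hd : e (f.eulerCoeff (root f) i) = c • h.eulerCoeff (root h) i := by
    rw [map_eulerCoeff, algEquivOfAssociated_root, eulerCoeff_mul_C f (inv_ne_zero hc),
      smul_smul, mul_inv_cancel₀ hc, one_smul]
  have hg' : (c • e g) * mk h (derivative h) = 1 := by
    rw [derivative_mul, derivative_C, mul_zero, add_zero, map_mul, mk_C, ← he, smul_mul_assoc,
      ← mul_assoc, ← map_mul, hg, map_one, one_mul, ← algebraMap_eq, Algebra.smul_def,
      ← map_mul, mul_inv_cancel₀ hc, map_one]
  have hdeg : h.natDegree = f.natDegree := natDegree_mul_C (inv_ne_zero hc)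
  rw [← Algebra.trace_eq_of_algEquiv e, map_mul e, map_mul e, map_pow e,
    algEquivOfAssociated_root, hd, smul_mul_assoc, smul_mul_assoc, ← mul_smul_comm]
  exact trace_eulerCoeff_mul_root_pow_mul (monic_mul_leadingCoeff_inv hf) hg' (hdeg ▸ hi)
    (hdeg ▸ hj)

end AdjoinRoot

theorem trace_dual_basis_general
    (k : Type*) [Field k] (f : k[X]) (n : ℕ) (hn : f.natDegree = n)
    (t : k[X] ⧸ Ideal.span {f}) (ht : t = Ideal.Quotient.mk (Ideal.span {f}) X)
    (d : ℕ → k[X] ⧸ Ideal.span {f})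
    (hd : ∀ i, d i = ∑ j ∈ range (n - i), f.coeff (i + 1 + j) • t ^ j)
    (g : k[X] ⧸ Ideal.span {f})
    (hg : g * Ideal.Quotient.mk (Ideal.span {f}) (derivative f) = 1)
    (i j : ℕ) (hi : i < n) (hj : j < n) :
    Algebra.trace k (k[X] ⧸ Ideal.span {f}) (d i * t ^ j * g)
      = if i = j then 1 else 0 := by
  subst hn ht
  rw [hd i]
  exact AdjoinRoot.trace_eulerCoeff_mul_root_pow_mul_of_ne_zero (by rintro rfl; simp at hi) hg
    hi hj

/-- For a separable polynomial `f` of degree `n` over a field `k`, with `A = k[T]/(f)`,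
`t` the image of `T`, `dᵢ = a_{i+1} + a_{i+2} t + ⋯ + aₙ t^{n-1-i}`, and `g = f'(t)⁻¹`,
the elements `dᵢ / f'(t)` form the dual basis of `1, t, …, t^{n-1}` with respect to the
trace form: `Tr_{A/k}(dᵢ tʲ / f'(t)) = δᵢⱼ`. -/
theorem trace_dual_basis
    (k : Type*) [Field k] (f : k[X]) (n : ℕ) (hn : f.natDegree = n) (h1 : 1 ≤ n)
    (hsep : f.Separable)
    (t : k[X] ⧸ Ideal.span {f}) (ht : t = Ideal.Quotient.mk (Ideal.span {f}) X)
    (d : ℕ → k[X] ⧸ Ideal.span {f})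
    (hd : ∀ i, d i = ∑ j ∈ range (n - i), f.coeff (i + 1 + j) • t ^ j)
    (g : k[X] ⧸ Ideal.span {f})
    (hg : g * Ideal.Quotient.mk (Ideal.span {f}) (derivative f) = 1)
    (i j : ℕ) (hi : i < n) (hj : j < n) :
    Algebra.trace k (k[X] ⧸ Ideal.span {f}) (d i * t ^ j * g)
      = if i = j then 1 else 0 :=
  trace_dual_basis_general k f n hn t ht d hd g hg i j hi hj
end

section
/- Let k be a field of characteristic 2, f(T) = Σ a_i T^i ∈ k[T] separable of degree n, A = k[T]/(f), and d_i as above (with the convention a_i = 0 for i < 0 or i > n). If r₀d₀ + ⋯ + r_{n-1}d_{n-1} = (s₀d₀ + ⋯ + s_{n-1}d_{n-1})² in A, then r_k = Σ_{j=0}^{n-1} s_j² a_{2j+1-k} for every k = 0,…,n-1. -/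
open Polynomial Finset

/-!
Put `Dᵢ = divX^[i+1] f = ∑ᵤ a_{i+1+u} Xᵘ`, a polynomial of degree `< n` whose image in `A`
is `dᵢ`. Two identities for the truncated quotient `divX^[m]` do all the work: a Leibniz-type rule
`divX^[m] (f * g) = ∑_{l<m} a_l • divX^[m-l] g + divX^[m] f * g`, and, in characteristic 2,
`(divX^[m] g)² = divX^[2m] (g²)` because squaring is the Frobenius. Taking `g = f`, `m = 2j+2`
gives `D_j² = ∑_l a_l • D_{2j+1-l} + D_{2j+1} * f`, hence `d_j² = ∑_k a_{2j+1-k} d_k` in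
`A`, and Frobenius expands `(∑ s_j d_j)²`. The coefficients are then read off: a combination of
the `Dᵢ` has degree `< n`, so it is divisible by `f` only if it vanishes, and the `Dᵢ` are
triangular with diagonal entry `a_n`.
-/

namespace Polynomial

section Semiring

variable {R : Type*} [Semiring R]

theorem coeff_divX_iterate (p : R[X]) (m i : ℕ) : (divX^[m] p).coeff i = p.coeff (i + m) := by
  induction m generalizing i with
  | zero => rfl
  | succ m ih => rw [Function.iterate_succ_apply', coeff_divX, ih, add_right_comm, add_assoc]

theorem divX_iterate_eq_zero_of_natDegree_lt {p : R[X]} {m : ℕ} (h : p.natDegree < m) :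
    divX^[m] p = 0 := by
  ext i
  rw [coeff_divX_iterate, coeff_zero, coeff_eq_zero_of_natDegree_lt (by omega)]

theorem divX_iterate_succ_eq_sum (p : R[X]) (i : ℕ) :
    divX^[i + 1] p = ∑ j ∈ range (p.natDegree - i), p.coeff (i + 1 + j) • X ^ j := by
  ext m
  simp only [coeff_divX_iterate, finsetSum_coeff, coeff_smul, coeff_X_pow, smul_eq_mul,
    mul_ite, mul_one, mul_zero, sum_ite_eq, mem_range]
  split_ifs with hm
  · rw [add_comm]
  · exact coeff_eq_zero_of_natDegree_lt (by omega)

theorem divX_iterate_mul (f g : R[X]) (m : ℕ) :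
    divX^[m] (f * g) = ∑ l ∈ range m, f.coeff l • divX^[m - l] g + divX^[m] f * g := by
  ext i
  simp only [coeff_divX_iterate, coeff_add, finsetSum_coeff, coeff_smul, smul_eq_mul, coeff_mul,
    Nat.sum_antidiagonal_eq_sum_range_succ_mk]
  rw [show (i + m).succ = m + (i + 1) by omega, sum_range_add]
  congr 1 <;> refine sum_congr rfl fun l hl => ?_ <;> rw [mem_range] at hl <;> congr 2 <;> omega

end Semiring

section CommSemiring

variable {R : Type*} [CommSemiring R]

theorem divX_iterate_pow_char (p : ℕ) [ExpChar R p] (g : R[X]) (m : ℕ) :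
    (divX^[m] g) ^ p = divX^[p * m] (g ^ p) := by
  have hp : 0 < p := expChar_pos R p
  ext i
  simp only [← map_frobenius_expand, coeff_map, coeff_expand hp, coeff_divX_iterate]
  simp only [Nat.add_mul_div_left _ _ hp, Nat.dvd_add_left (dvd_mul_right p m)]

theorem sq_divX_iterate_succ [CharP R 2] (f : R[X]) (j : ℕ) :
    (divX^[j + 1] f) ^ 2 =
      ∑ l ∈ range (2 * j + 2), f.coeff l • divX^[2 * j + 2 - l] f +
        divX^[2 * j + 2] f * f := by
  rw [divX_iterate_pow_char, sq, divX_iterate_mul, mul_add, mul_one]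

theorem sq_divX_iterate_succ_eq_sum [CharP R 2] (f : R[X]) (j : ℕ) :
    (divX^[j + 1] f) ^ 2 =
      ∑ k ∈ range f.natDegree, (if k ≤ 2 * j + 1 then f.coeff (2 * j + 1 - k) else 0) •
        divX^[k + 1] f + divX^[2 * j + 2] f * f := by
  rw [sq_divX_iterate_succ, ← sum_range_reflect]
  congr 1
  simp only [ite_smul, zero_smul]
  rw [← sum_filter]
  refine (sum_congr rfl fun l hl => ?_).trans
    (sum_subset (fun k hk => ?_) fun k hk hk' => ?_).symm
  · rw [mem_range] at hl
    congr 2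
    omega
  · simp only [mem_filter, mem_range] at hk ⊢
    omega
  · simp only [mem_filter, mem_range, not_and, not_le] at hk hk'
    rw [divX_iterate_eq_zero_of_natDegree_lt (by omega), smul_zero]

theorem sq_sum_smul_divX_iterate_succ [CharP R 2] (f : R[X]) (s : ℕ → R) :
    (∑ i ∈ range f.natDegree, s i • divX^[i + 1] f) ^ 2 =
      ∑ k ∈ range f.natDegree, (∑ j ∈ range f.natDegree,
          s j ^ 2 * (if k ≤ 2 * j + 1 then f.coeff (2 * j + 1 - k) else 0)) • divX^[k + 1] f +
        (∑ j ∈ range f.natDegree, s j ^ 2 • divX^[2 * j + 2] f) * f := by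
  simp only [sum_pow_char, _root_.smul_pow, sq_divX_iterate_succ_eq_sum, smul_add,
    sum_add_distrib, smul_sum, smul_smul, sum_smul, sum_mul, smul_mul_assoc]
  rw [sum_comm]

end CommSemiring

section Field

variable {K : Type*} [Field K]

theorem eq_zero_of_dvd_sum_smul_divX_iterate_succ {f : K[X]} {c : ℕ → K}
    (hdvd : f ∣ ∑ k ∈ range f.natDegree, c k • divX^[k + 1] f) {i : ℕ}
    (hi : i < f.natDegree) :
    c i = 0 := by
  have hf : f ≠ 0 := by rintro rfl; simp at hi
  set g := ∑ k ∈ range f.natDegree, c k • divX^[k + 1] f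
  have hg_coeff : ∀ p, g.coeff p = ∑ k ∈ range f.natDegree, c k * f.coeff (p + (k + 1)) := by
    intro p
    simp only [g, finsetSum_coeff, coeff_smul, coeff_divX_iterate, smul_eq_mul]
  have hg : g = 0 := by
    refine eq_zero_of_dvd_of_degree_lt hdvd ?_
    rw [degree_eq_natDegree hf, degree_lt_iff_coeff_zero]
    intro p hp
    rw [hg_coeff]
    exact sum_eq_zero fun k _ => by rw [coeff_eq_zero_of_natDegree_lt (by omega), mul_zero]
  induction i using Nat.strong_induction_on with
  | _ i ih =>
    -- the coefficient of `X ^ (natDegree f - 1 - i)` only involves `c k` for `k ≤ i`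
    have htop := hg_coeff (f.natDegree - 1 - i)
    rw [hg, coeff_zero, sum_eq_single i,
      show f.natDegree - 1 - i + (i + 1) = f.natDegree by omega] at htop
    · exact (mul_eq_zero.mp htop.symm).resolve_right (leadingCoeff_ne_zero.mpr hf)
    · intro k hk hki
      rw [mem_range] at hk
      rcases lt_or_gt_of_ne hki with hlt | hgt
      · rw [ih k hlt (hlt.trans hi), zero_mul]
      · rw [coeff_eq_zero_of_natDegree_lt (by omega), mul_zero]
    · exact fun h => (h (mem_range.mpr hi)).elim

end Field

end Polynomial

theorem square_in_d_basis_general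
    (k : Type*) [Field k] [CharP k 2] (f : k[X]) (n : ℕ) (hn : f.natDegree = n)
    (t : k[X] ⧸ Ideal.span {f}) (ht : t = Ideal.Quotient.mk (Ideal.span {f}) X)
    (d : ℕ → k[X] ⧸ Ideal.span {f})
    (hd : ∀ i, d i = ∑ j ∈ range (n - i), f.coeff (i + 1 + j) • t ^ j)
    (r s : ℕ → k)
    (h : ∑ i ∈ range n, r i • d i = (∑ i ∈ range n, s i • d i) ^ 2)
    (κ : ℕ) (hκ : κ < n) :
    r κ = ∑ j ∈ range n,
      (s j) ^ 2 * (if κ ≤ 2 * j + 1 then f.coeff (2 * j + 1 - κ) else 0) := by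
  subst hn ht
  set π := Ideal.Quotient.mkₐ k (Ideal.span {f})
  have hd_eq : ∀ i, d i = π (divX^[i + 1] f) := fun i => by
    simp only [hd, divX_iterate_succ_eq_sum, map_sum, map_smul, map_pow, π,
      Ideal.Quotient.mkₐ_eq_mk]
  have hπ_sum : ∀ c : ℕ → k, ∑ i ∈ range f.natDegree, c i • d i =
      π (∑ i ∈ range f.natDegree, c i • divX^[i + 1] f) := fun c => by
    simp only [hd_eq, map_sum, map_smul]
  rw [hπ_sum, hπ_sum, ← map_pow, sq_sum_smul_divX_iterate_succ] at h
  have hdvd := Ideal.mem_span_singleton.mp (Ideal.Quotient.eq.mp h)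
  rw [← sub_sub, dvd_sub_left (dvd_mul_left f _), ← sum_sub_distrib] at hdvd
  simp only [← sub_smul] at hdvd
  exact sub_eq_zero.mp (eq_zero_of_dvd_sum_smul_divX_iterate_succ hdvd hκ)

/-- Squaring formula in the basis `d₀, …, d_{n-1}` of `A = k[T]/(f)` over a field of
characteristic 2: if `∑ rᵢ dᵢ = (∑ sᵢ dᵢ)²` then `r_k = ∑ⱼ sⱼ² a_{2j+1-k}`,
with the convention that `aᵢ = 0` for `i < 0` or `i > n` (the coefficients of `f`
outside its degree range vanish). -/
theorem square_in_d_basis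
    (k : Type*) [Field k] [CharP k 2] (f : k[X]) (n : ℕ) (hn : f.natDegree = n)
    (h1 : 1 ≤ n) (hsep : f.Separable)
    (t : k[X] ⧸ Ideal.span {f}) (ht : t = Ideal.Quotient.mk (Ideal.span {f}) X)
    (d : ℕ → k[X] ⧸ Ideal.span {f})
    (hd : ∀ i, d i = ∑ j ∈ range (n - i), f.coeff (i + 1 + j) • t ^ j)
    (r s : ℕ → k)
    (h : ∑ i ∈ range n, r i • d i = (∑ i ∈ range n, s i • d i) ^ 2)
    (κ : ℕ) (hκ : κ < n) :
    r κ = ∑ j ∈ range n,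
      (s j) ^ 2 * (if κ ≤ 2 * j + 1 then f.coeff (2 * j + 1 - κ) else 0) :=
  square_in_d_basis_general k f n hn t ht d hd r s h κ hκ
end

section
/- Let k be a field of characteristic 2 and E a k-vector space of odd dimension n = 2m+1 with basis w₀,…,w_m, v₀,…,v_{m-1}. Let (b₀,b₁) be the basic singular pair of alternating bilinear forms given by b₀(w_i,v_j) = δ_{i,j+1}, b₁(w_i,v_j) = δ_{ij}, and all other pairings among basis vectors zero. Then for (λ,μ) ≠ (0,0), the radical of λb₀ + μb₁ is one-dimensional, spanned by Ω(λ,μ) = Σ_{i=0}^m λ^{m-i}μ^i w_i. -/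
/-!
Writing `D x = (λ x_{j+1} + μ x_j)_j` for the bidiagonal map `k^{m+1} → k^m`, one has
`λ b₀(z, w) + μ b₁(z, w) = D z₁ ⬝ w₂ + D w₁ ⬝ z₂`. A vector in the kernel of `D` is determined by
its first coordinate when `λ ≠ 0` and by its last one when `μ ≠ 0`, and in characteristic 2 the
vector `Ω` lies in the kernel, so `ker D = k ∙ Ω`. By rank–nullity `D` is then surjective, which
forces `z₂ = 0` for `z` in the radical; the radical is therefore `ker D × 0 = k ∙ (Ω, 0)`.
-/

/-- The first alternating bilinear form `b₀` of the basic singular pair on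
`E = span(w₀,…,w_m) ⊕ span(v₀,…,v_{m-1})`, with `b₀(wᵢ, vⱼ) = δ_{i,j+1}` and all other
pairings among basis vectors zero. -/
def basicSingB0 (k : Type*) [Field k] (m : ℕ)
    (z w : (Fin (m + 1) → k) × (Fin m → k)) : k :=
  ∑ j : Fin m, (z.1 j.succ * w.2 j + w.1 j.succ * z.2 j)

/-- The second alternating bilinear form `b₁` of the basic singular pair, with
`b₁(wᵢ, vⱼ) = δ_{ij}` and all other pairings among basis vectors zero. -/
def basicSingB1 (k : Type*) [Field k] (m : ℕ)
    (z w : (Fin (m + 1) → k) × (Fin m → k)) : k :=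
  ∑ j : Fin m, (z.1 j.castSucc * w.2 j + w.1 j.castSucc * z.2 j)

open Finset

section Pencil

variable {k : Type*} [Field k] {m : ℕ}

def pencilMap (lam mu : k) : (Fin (m + 1) → k) →ₗ[k] (Fin m → k) where
  toFun x j := lam * x j.succ + mu * x j.castSucc
  map_add' x y := by
    funext j
    simp only [Pi.add_apply]
    ring
  map_smul' c x := by
    funext j
    simp only [Pi.smul_apply, smul_eq_mul, RingHom.id_apply]
    ring

lemma pencilMap_apply (lam mu : k) (x : Fin (m + 1) → k) (j : Fin m) :
    pencilMap lam mu x j = lam * x j.succ + mu * x j.castSucc :=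
  rfl

def pencilVector (lam mu : k) (m : ℕ) : Fin (m + 1) → k :=
  fun i => lam ^ (m - (i : ℕ)) * mu ^ (i : ℕ)

lemma pencilVector_ne_zero {lam mu : k} (h : lam ≠ 0 ∨ mu ≠ 0) : pencilVector lam mu m ≠ 0 := by
  intro h0
  rcases h with hlam | hmu
  · have h00 := congrFun h0 0
    simp only [pencilVector, Fin.val_zero, Nat.sub_zero, pow_zero, mul_one,
      Pi.zero_apply] at h00
    exact pow_ne_zero m hlam h00
  · have hlast := congrFun h0 (Fin.last m)
    simp only [pencilVector, Fin.val_last, Nat.sub_self, pow_zero, one_mul,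
      Pi.zero_apply] at hlast
    exact pow_ne_zero m hmu hlast

lemma pencilMap_pencilVector [CharP k 2] (lam mu : k) :
    pencilMap lam mu (pencilVector lam mu m) = 0 := by
  funext j
  have hm : m - (j : ℕ) = m - ((j : ℕ) + 1) + 1 := by omega
  simp only [pencilMap_apply, pencilVector, Fin.val_succ, Fin.val_castSucc, hm, Pi.zero_apply]
  -- both summands equal `λ^{m-j} μ^{j+1}`, and `a + a = 0` in characteristic 2
  rw [← CharTwo.add_self_eq_zero (lam ^ (m - ((j : ℕ) + 1) + 1) * mu ^ (j : ℕ) * mu)]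
  ring

lemma eq_zero_of_pencilMap_eq_zero_of_apply_zero {lam mu : k} (hlam : lam ≠ 0)
    {x : Fin (m + 1) → k} (hx : pencilMap lam mu x = 0) (h0 : x 0 = 0) : x = 0 := by
  suffices ∀ i, x i = 0 from funext this
  intro i
  induction i using Fin.induction with
  | zero => exact h0
  | succ j ih =>
    have hj : lam * x j.succ + mu * x j.castSucc = 0 := congrFun hx j
    rw [ih, mul_zero, add_zero] at hj
    exact (mul_eq_zero.mp hj).resolve_left hlam

lemma eq_zero_of_pencilMap_eq_zero_of_apply_last {lam mu : k} (hmu : mu ≠ 0)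
    {x : Fin (m + 1) → k} (hx : pencilMap lam mu x = 0) (hlast : x (Fin.last m) = 0) :
    x = 0 := by
  suffices ∀ i, x i = 0 from funext this
  intro i
  induction i using Fin.reverseInduction with
  | last => exact hlast
  | cast j ih =>
    have hj : lam * x j.succ + mu * x j.castSucc = 0 := congrFun hx j
    rw [ih, mul_zero, zero_add] at hj
    exact (mul_eq_zero.mp hj).resolve_left hmu

lemma ker_pencilMap [CharP k 2] {lam mu : k} (h : lam ≠ 0 ∨ mu ≠ 0) :
    LinearMap.ker (pencilMap lam mu) = k ∙ pencilVector lam mu m := by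
  refine le_antisymm (fun x hx => ?_) ?_
  · rw [LinearMap.mem_ker] at hx
    rw [Submodule.mem_span_singleton]
    rcases h with hlam | hmu
    · have hΩ : pencilVector lam mu m 0 ≠ 0 := by simp [pencilVector, hlam]
      refine ⟨x 0 / pencilVector lam mu m 0, (sub_eq_zero.mp ?_).symm⟩
      refine eq_zero_of_pencilMap_eq_zero_of_apply_zero (mu := mu) hlam ?_ ?_
      · rw [map_sub, map_smul, hx, pencilMap_pencilVector, smul_zero, sub_zero]
      · simp [hΩ]
    · have hΩ : pencilVector lam mu m (Fin.last m) ≠ 0 := by simp [pencilVector, hmu]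
      refine ⟨x (Fin.last m) / pencilVector lam mu m (Fin.last m), (sub_eq_zero.mp ?_).symm⟩
      refine eq_zero_of_pencilMap_eq_zero_of_apply_last (lam := lam) hmu ?_ ?_
      · rw [map_sub, map_smul, hx, pencilMap_pencilVector, smul_zero, sub_zero]
      · simp [hΩ]
  · exact (Submodule.span_singleton_le_iff_mem _ _).mpr (pencilMap_pencilVector lam mu)

lemma pencilMap_surjective [CharP k 2] {lam mu : k} (h : lam ≠ 0 ∨ mu ≠ 0) :
    Function.Surjective (pencilMap (m := m) lam mu) := by
  have hrank := LinearMap.finrank_range_add_finrank_ker (pencilMap (m := m) lam mu)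
  rw [ker_pencilMap h, finrank_span_singleton (pencilVector_ne_zero h),
    Module.finrank_fin_fun] at hrank
  rw [← LinearMap.range_eq_top]
  apply Submodule.eq_top_of_finrank_eq
  rw [Module.finrank_fin_fun]
  omega

lemma pencil_form_eq (lam mu : k) (z w : (Fin (m + 1) → k) × (Fin m → k)) :
    lam * basicSingB0 k m z w + mu * basicSingB1 k m z w =
      pencilMap lam mu z.1 ⬝ᵥ w.2 + pencilMap lam mu w.1 ⬝ᵥ z.2 := by
  simp only [basicSingB0, basicSingB1, dotProduct, pencilMap_apply, mul_sum,
    ← sum_add_distrib]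
  refine sum_congr rfl fun j _ => ?_
  ring

end Pencil

lemma forall_dotProduct_add_dotProduct_eq_zero_iff {k V ι : Type*} [Field k] [AddCommGroup V]
    [Module k V] [Fintype ι] [DecidableEq ι] {f : V →ₗ[k] ι → k} (hf : Function.Surjective f)
    (z : V × (ι → k)) :
    (∀ w : V × (ι → k), f z.1 ⬝ᵥ w.2 + f w.1 ⬝ᵥ z.2 = 0) ↔ f z.1 = 0 ∧ z.2 = 0 := by
  refine ⟨fun hz => ⟨funext fun j => ?_, funext fun j => ?_⟩, fun ⟨h1, h2⟩ w => by simp [h1, h2]⟩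
  · simpa using hz (0, Pi.single j 1)
  · obtain ⟨x, hx⟩ := hf (Pi.single j 1)
    simpa [hx] using hz (x, 0)

/-- For the basic singular pair `(b₀, b₁)` on a `(2m+1)`-dimensional space over a field of
characteristic 2, and `(λ, μ) ≠ (0, 0)`, the radical of `λb₀ + μb₁` is one-dimensional,
spanned by the nonzero vector `Ω(λ,μ) = ∑ᵢ λ^{m-i} μ^i wᵢ`. -/
theorem radical_of_pencil_member
    (k : Type*) [Field k] [CharP k 2] (m : ℕ) (lam mu : k)
    (h : (lam, mu) ≠ (0, 0)) :
    ((fun i : Fin (m + 1) => lam ^ (m - (i : ℕ)) * mu ^ (i : ℕ), 0)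
        : (Fin (m + 1) → k) × (Fin m → k)) ≠ 0 ∧
      ∀ z : (Fin (m + 1) → k) × (Fin m → k),
        (∀ w, lam * basicSingB0 k m z w + mu * basicSingB1 k m z w = 0) ↔
          ∃ c : k, z = c •
            ((fun i : Fin (m + 1) => lam ^ (m - (i : ℕ)) * mu ^ (i : ℕ), 0)
              : (Fin (m + 1) → k) × (Fin m → k)) := by
  have hlm : lam ≠ 0 ∨ mu ≠ 0 := by
    by_contra! h0
    exact h (by rw [h0.1, h0.2])
  refine ⟨fun h0 => pencilVector_ne_zero hlm (congrArg Prod.fst h0), fun z => ?_⟩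
  simp only [pencil_form_eq]
  rw [forall_dotProduct_add_dotProduct_eq_zero_iff (pencilMap_surjective hlm), ← LinearMap.mem_ker,
    ker_pencilMap hlm, Submodule.mem_span_singleton]
  constructor
  · rintro ⟨⟨c, hc⟩, hz₂⟩
    exact ⟨c, Prod.ext hc.symm (hz₂.trans (smul_zero c).symm)⟩
  · rintro ⟨c, rfl⟩
    exact ⟨⟨c, rfl⟩, smul_zero c⟩
end

section
/- Let k be a field of characteristic 2, E a vector space of dimension 3 with a quadratic form q = Σ_{1≤i≤j≤3} a_{ij} x_i x_j. Then the half-discriminant of q equals a₁₁a₂₃² + a₂₂a₁₃² + a₃₃a₁₂² + a₁₂a₂₃a₁₃, and the projective conic V(q) ⊂ P² is smooth if and only if this quantity is nonzero. -/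
/-!
In characteristic 2 the polar form of `q` is `(v, w) ↦ (ω ×₃ v) ⬝ᵥ w = det (ω, v, w)`, so the
radical of the polar form consists of the multiples of `ω` (it is everything when `ω = 0`).
If `q ω ≠ 0`, a singular vector `c • ω` has `q (c • ω) = c² q ω`, forcing `c = 0`. If `q ω = 0`,
then `ω` itself is singular unless `ω = 0`; in that case `q = a₁₁x² + a₂₂y² + a₃₃z²`, and with
`s² = a₁₁`, `t² = a₂₂` (the field is perfect) the vector `(t, s, 0)`, or `(1, 0, 0)` when `s = 0`,
is a nonzero zero of `q`.
-/

def ternaryForm {R : Type*} [CommRing R] (a11 a22 a33 a12 a13 a23 : R) (v : Fin 3 → R) : R :=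
  a11 * (v 0) ^ 2 + a22 * (v 1) ^ 2 + a33 * (v 2) ^ 2
    + a12 * (v 0) * (v 1) + a13 * (v 0) * (v 2) + a23 * (v 1) * (v 2)

open Matrix

namespace ternaryForm

section CommRing

variable {R : Type*} [CommRing R] (a11 a22 a33 a12 a13 a23 : R)

theorem smul (c : R) (v : Fin 3 → R) :
    ternaryForm a11 a22 a33 a12 a13 a23 (c • v)
      = c ^ 2 * ternaryForm a11 a22 a33 a12 a13 a23 v := by
  simp only [ternaryForm, Pi.smul_apply, smul_eq_mul]
  ring

variable [CharP R 2]

theorem apply_pfaffians :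
    ternaryForm a11 a22 a33 a12 a13 a23 ![a23, a13, a12]
      = a11 * a23 ^ 2 + a22 * a13 ^ 2 + a33 * a12 ^ 2 + a12 * a23 * a13 := by
  simp only [ternaryForm, cons_val_zero, cons_val_one, cons_val_two,
    head_cons, tail_cons]
  linear_combination (a12 * a13 * a23) * CharTwo.two_eq_zero (R := R)

theorem polar_eq_triple_product (v w : Fin 3 → R) :
    ternaryForm a11 a22 a33 a12 a13 a23 (v + w) - ternaryForm a11 a22 a33 a12 a13 a23 v
      - ternaryForm a11 a22 a33 a12 a13 a23 w = ![a23, a13, a12] ⨯₃ v ⬝ᵥ w := by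
  simp only [ternaryForm, cross_apply, Pi.add_apply, dotProduct, Fin.sum_univ_three,
    cons_val_zero, cons_val_one, cons_val_two,
    head_cons, tail_cons]
  linear_combination (a11 * v 0 * w 0 + a22 * v 1 * w 1 + a33 * v 2 * w 2 + a12 * v 1 * w 0
    + a13 * v 0 * w 2 + a23 * v 2 * w 1) * CharTwo.two_eq_zero (R := R)

theorem polar_eq_zero_iff (v : Fin 3 → R) :
    (∀ w, ternaryForm a11 a22 a33 a12 a13 a23 (v + w) - ternaryForm a11 a22 a33 a12 a13 a23 v
      - ternaryForm a11 a22 a33 a12 a13 a23 w = 0) ↔ ![a23, a13, a12] ⨯₃ v = 0 := by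
  simp only [polar_eq_triple_product]
  exact dotProduct_eq_zero_iff

end CommRing

section Field

variable {F : Type*} [Field F] {a11 a22 a33 a12 a13 a23 : F}

theorem eq_zero_of_apply_eq_zero_of_cross_eq_zero
    (hω : ternaryForm a11 a22 a33 a12 a13 a23 ![a23, a13, a12] ≠ 0) {v : Fin 3 → F}
    (hv : ternaryForm a11 a22 a33 a12 a13 a23 v = 0)
    (hcross : ![a23, a13, a12] ⨯₃ v = 0) : v = 0 := by
  have hω₀ : ![a23, a13, a12] ≠ 0 := by
    intro h
    rw [h] at hω
    simp [ternaryForm] at hω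
  by_contra hv₀
  obtain ⟨c, rfl⟩ : ∃ c : F, c • ![a23, a13, a12] = v := by
    by_contra! hindep
    exact crossProduct_ne_zero_iff_linearIndependent.mpr
      ((LinearIndependent.pair_iff' hω₀).mpr hindep) hcross
  have hc : c ≠ 0 := by rintro rfl; simp at hv₀
  rw [smul] at hv
  exact mul_ne_zero (pow_ne_zero 2 hc) hω hv

variable [CharP F 2] [PerfectRing F 2]

theorem exists_ne_zero_apply_eq_zero_of_diagonal (a11 a22 a33 : F) :
    ∃ v : Fin 3 → F, v ≠ 0 ∧ ternaryForm a11 a22 a33 0 0 0 v = 0 := by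
  by_cases ha11 : a11 = 0
  · exact ⟨![1, 0, 0], by simp, by simp [ternaryForm, ha11]⟩
  obtain ⟨s, rfl⟩ := surjective_frobenius F 2 a11
  obtain ⟨t, rfl⟩ := surjective_frobenius F 2 a22
  have hs : s ≠ 0 := by rintro rfl; simp at ha11
  refine ⟨![t, s, 0], fun h ↦ hs (by simpa using congrFun h 1), ?_⟩
  simp only [ternaryForm, frobenius_def, cons_val_zero, cons_val_one,
    cons_val_two, head_cons, tail_cons]
  linear_combination (s ^ 2 * t ^ 2) * CharTwo.two_eq_zero (R := F)

theorem exists_singular_of_apply_pfaffians_eq_zero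
    (hω : ternaryForm a11 a22 a33 a12 a13 a23 ![a23, a13, a12] = 0) :
    ∃ v : Fin 3 → F, v ≠ 0 ∧ ternaryForm a11 a22 a33 a12 a13 a23 v = 0 ∧
      ![a23, a13, a12] ⨯₃ v = 0 := by
  by_cases hω₀ : ![a23, a13, a12] = 0
  · obtain ⟨rfl, rfl, rfl⟩ : a23 = 0 ∧ a13 = 0 ∧ a12 = 0 := by
      simpa using hω₀
    obtain ⟨v, hv, hqv⟩ := exists_ne_zero_apply_eq_zero_of_diagonal a11 a22 a33
    exact ⟨v, hv, hqv, by rw [hω₀, map_zero, LinearMap.zero_apply]⟩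
  · exact ⟨_, hω₀, hω, cross_self _⟩

end Field

end ternaryForm

/-- For a ternary quadratic form `q = ∑ aᵢⱼ xᵢ xⱼ` over an algebraically closed field of
characteristic 2, the half-discriminant `q(ω)` (where `ω = (a₂₃, a₁₃, a₁₂)` is the vector
of Pfaffians of the polar form) equals
`a₁₁a₂₃² + a₂₂a₁₃² + a₃₃a₁₂² + a₁₂a₂₃a₁₃`, and the projective conic `V(q) ⊆ ℙ²` is smooth
(has no nonzero singular vector) if and only if this quantity is nonzero. -/
theorem half_discriminant_ternary
    (k : Type*) [Field k] [IsAlgClosed k] [CharP k 2]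
    (a11 a22 a33 a12 a13 a23 : k)
    (q : (Fin 3 → k) → k)
    (hq : ∀ v, q v = a11 * (v 0) ^ 2 + a22 * (v 1) ^ 2 + a33 * (v 2) ^ 2
      + a12 * (v 0) * (v 1) + a13 * (v 0) * (v 2) + a23 * (v 1) * (v 2)) :
    q ![a23, a13, a12]
        = a11 * a23 ^ 2 + a22 * a13 ^ 2 + a33 * a12 ^ 2 + a12 * a23 * a13 ∧
      ((a11 * a23 ^ 2 + a22 * a13 ^ 2 + a33 * a12 ^ 2 + a12 * a23 * a13 ≠ 0) ↔
        ∀ v : Fin 3 → k, v ≠ 0 →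
          ¬(q v = 0 ∧ ∀ w, q (v + w) - q v - q w = 0)) := by
  obtain rfl : q = ternaryForm a11 a22 a33 a12 a13 a23 := funext hq
  refine ⟨ternaryForm.apply_pfaffians .., ?_⟩
  simp only [← ternaryForm.apply_pfaffians, ternaryForm.polar_eq_zero_iff]
  constructor
  · rintro hω v hv ⟨hqv, hcross⟩
    exact hv (ternaryForm.eq_zero_of_apply_eq_zero_of_cross_eq_zero hω hqv hcross)
  · intro hsmooth hω
    obtain ⟨v, hv, hqv, hcross⟩ := ternaryForm.exists_singular_of_apply_pfaffians_eq_zero hω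
    exact hsmooth v hv ⟨hqv, hcross⟩
end

section
/- Let k be a field of characteristic 2 and E of dimension n = 2m+1 with a regular pencil of quadratic forms q₀, q₁ in Kronecker normal form with coefficients a₀,…,a_n. Then the half-discriminant of the pencil satisfies Δ(t₀,t₁) = (t₀q₀ + t₁q₁)(Ω(t₀,t₁)) = Σ_{i=0}^{2m+1} a_i t₀^{2m+1-i} t₁^i, where Ω(t₀,t₁) = (t₀^m, t₀^{m-1}t₁, …, t₁^m, 0, …, 0) in the Kronecker basis. -/
open Polynomial Finset

/-! At `Ω` every `y`-coordinate vanishes, so of `t₀q₀ + t₁q₁` only the diagonal terms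
`t₀ a_{2i} xᵢ²` and `t₁ a_{2i+1} xᵢ²` survive; with `xᵢ = t₀^{m-i} t₁^i` these are exactly the
monomials of even and odd index in `∑ aᵢ t₀^{2m+1-i} t₁^i`. -/

/-- The quadratic form `q₀ = ∑ a_{2i} xᵢ² + ∑ x_{i+1} yᵢ + ∑ r_{2i+1} yᵢ²` of a pair in
Kronecker normal form. -/
def nfQ0 (k : Type*) [Field k] (m : ℕ) (a r : ℕ → k)
    (z : (Fin (m + 1) → k) × (Fin m → k)) : k :=
  (∑ i : Fin (m + 1), a (2 * i) * (z.1 i) ^ 2)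
    + (∑ i : Fin m, z.1 i.succ * z.2 i)
    + (∑ i : Fin m, r (2 * i + 1) * (z.2 i) ^ 2)

/-- The quadratic form `q₁ = ∑ a_{2i+1} xᵢ² + ∑ xᵢ yᵢ + ∑ r_{2i} yᵢ²` of a pair in
Kronecker normal form. -/
def nfQ1 (k : Type*) [Field k] (m : ℕ) (a r : ℕ → k)
    (z : (Fin (m + 1) → k) × (Fin m → k)) : k :=
  (∑ i : Fin (m + 1), a (2 * i + 1) * (z.1 i) ^ 2)
    + (∑ i : Fin m, z.1 i.castSucc * z.2 i)
    + (∑ i : Fin m, r (2 * i) * (z.2 i) ^ 2)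

/-- The half-discriminant polynomial `f(T) = ∑ aᵢ Tⁱ` of degree `n = 2m + 1`. -/
noncomputable def nfF (k : Type*) [Field k] (m : ℕ) (a : ℕ → k) : k[X] :=
  ∑ i ∈ range (2 * m + 2), C (a i) * X ^ i

theorem Finset.sum_range_two_mul {M : Type*} [AddCommMonoid M] (f : ℕ → M) (n : ℕ) :
    ∑ i ∈ range (2 * n), f i = ∑ i ∈ range n, (f (2 * i) + f (2 * i + 1)) := by
  induction n with
  | zero => simp
  | succ n ih =>
    rw [Nat.mul_succ, sum_range_succ, sum_range_succ, ih, sum_range_succ, add_assoc]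

section

variable {k : Type*} [Field k] {m : ℕ} {a : ℕ → k} (r : ℕ → k)

theorem nfQ0_mk_zero (x : ℕ → k) :
    nfQ0 k m a r (fun i => x i, 0) = ∑ i ∈ range (m + 1), a (2 * i) * x i ^ 2 := by
  simp [nfQ0, Fin.sum_univ_eq_sum_range (fun i => a (2 * i) * x i ^ 2)]

theorem nfQ1_mk_zero (x : ℕ → k) :
    nfQ1 k m a r (fun i => x i, 0) = ∑ i ∈ range (m + 1), a (2 * i + 1) * x i ^ 2 := by
  simp [nfQ1, Fin.sum_univ_eq_sum_range (fun i => a (2 * i + 1) * x i ^ 2)]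

end

theorem pencil_monomial_pair {R : Type*} [CommSemiring R] (c₀ c₁ t0 t1 : R) {m i : ℕ}
    (hi : i ≤ m) :
    t0 * (c₀ * (t0 ^ (m - i) * t1 ^ i) ^ 2) + t1 * (c₁ * (t0 ^ (m - i) * t1 ^ i) ^ 2)
      = c₀ * t0 ^ (2 * m + 1 - 2 * i) * t1 ^ (2 * i)
        + c₁ * t0 ^ (2 * m + 1 - (2 * i + 1)) * t1 ^ (2 * i + 1) := by
  rw [show 2 * m + 1 - 2 * i = 2 * (m - i) + 1 by omega,
    show 2 * m + 1 - (2 * i + 1) = 2 * (m - i) by omega]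
  ring

theorem half_discriminant_of_pencil_general
    (k : Type*) [Field k] (m : ℕ) (a r : ℕ → k) (t0 t1 : k) :
    t0 * nfQ0 k m a r (fun i => t0 ^ (m - (i : ℕ)) * t1 ^ (i : ℕ), 0)
        + t1 * nfQ1 k m a r (fun i => t0 ^ (m - (i : ℕ)) * t1 ^ (i : ℕ), 0)
      = ∑ i ∈ range (2 * m + 2), a i * t0 ^ (2 * m + 1 - i) * t1 ^ i := by
  rw [nfQ0_mk_zero r (fun i => t0 ^ (m - i) * t1 ^ i),
    nfQ1_mk_zero r (fun i => t0 ^ (m - i) * t1 ^ i), mul_sum, mul_sum, ← sum_add_distrib,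
    show 2 * m + 2 = 2 * (m + 1) by ring, sum_range_two_mul]
  refine sum_congr rfl fun i hi => ?_
  exact pencil_monomial_pair _ _ _ _ (Nat.lt_succ_iff.mp (mem_range.mp hi))

/-- For a regular pencil in Kronecker normal form, the half-discriminant of the pencil
satisfies `Δ(t₀,t₁) = (t₀q₀ + t₁q₁)(Ω(t₀,t₁)) = ∑ᵢ aᵢ t₀^{2m+1-i} t₁^i`, where
`Ω(t₀,t₁) = (t₀^m, t₀^{m-1}t₁, …, t₁^m, 0, …, 0)` in the Kronecker basis. -/
theorem half_discriminant_of_pencil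
    (k : Type*) [Field k] [CharP k 2] (m : ℕ) (a r : ℕ → k)
    (hsep : (nfF k m a).Separable) (han : a (2 * m + 1) ≠ 0)
    (t0 t1 : k) :
    t0 * nfQ0 k m a r (fun i => t0 ^ (m - (i : ℕ)) * t1 ^ (i : ℕ), 0)
        + t1 * nfQ1 k m a r (fun i => t0 ^ (m - (i : ℕ)) * t1 ^ (i : ℕ), 0)
      = ∑ i ∈ range (2 * m + 2), a i * t0 ^ (2 * m + 1 - i) * t1 ^ i :=
  half_discriminant_of_pencil_general k m a r t0 t1
end
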